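/- The partition function P_X is the unique ℤ-valued function on Γ satisfying ∇_X P_X = δ₀ whose support is contained in the cone C(X). -/

import Mathlib

open Function

attribute [local instance] Classical.propDecidable

noncomputable section

/-- The lattice `Γ = ι → ℤ`. -/
abbrev ZLat (ι : Type*) := ι → ℤ
/-- The ambient real vector space `V = Γ ⊗ ℝ = ι → ℝ`. -/
abbrev Amb (ι : Type*) := ι → ℝ

variable {ι : Type*} [Fintype ι]

/-- Embedding of the lattice into the ambient space. -/
def castV (γ : ZLat ι) : Amb ι := fun i => (γ i : ℝ)

/-- Standard pairing on `V`. -/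
def dotR (u v : Amb ι) : ℝ := ∑ i, u i * v i

/-- The difference operator `∇ₐ`. -/
def nab (a : ZLat ι) (f : ZLat ι → ℤ) : ZLat ι → ℤ := fun b => f b - f (b - a)

/-- `∇_Y = ∏_{a ∈ Y} ∇ₐ` for a list `Y`. -/
def nabL (Y : List (ZLat ι)) (f : ZLat ι → ℤ) : ZLat ι → ℤ := Y.foldr nab f

/-- Delta function at `0`. -/
def delta0 : ZLat ι → ℤ := fun γ => if γ = 0 then 1 else 0

/-- The partition function of a list `Y`: the number of ways of writing `γ` as a
nonnegative integral combination of the entries of `Y`. -/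
def partFn (Y : List (ZLat ι)) : ZLat ι → ℤ :=
  fun γ => Nat.card {k : Fin Y.length → ℕ // ∑ i, (k i : ℤ) • Y.get i = γ}

/-- The cone `C(Y)` of nonnegative real combinations of the entries of `Y`. -/
def coneC (Y : List (ZLat ι)) : Set (Amb ι) :=
  {v | ∃ t : Fin Y.length → ℝ, (∀ i, 0 ≤ t i) ∧ v = ∑ i, t i • castV (Y.get i)}

/-- `C(Y)` is pointed: it contains no line. -/
def PointedList (Y : List (ZLat ι)) : Prop :=
  ∀ v ∈ coneC Y, -v ∈ coneC Y → v = 0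

/-- The zonotope `B(Y) = {∑ tᵢ aᵢ : 0 ≤ tᵢ ≤ 1}`. -/
def zono (Y : List (ZLat ι)) : Set (Amb ι) :=
  {v | ∃ t : Fin Y.length → ℝ, (∀ i, 0 ≤ t i ∧ t i ≤ 1) ∧ v = ∑ i, t i • castV (Y.get i)}

/-- The real span of a list of lattice vectors. -/
def spanOf (Y : List (ZLat ι)) : Submodule ℝ (Amb ι) :=
  Submodule.span ℝ (castV '' {a | a ∈ Y})

/-- A subspace is rational (relative to `X`) if it is spanned by a sublist of `X`. -/
def IsRational (X : List (ZLat ι)) (r : Submodule ℝ (Amb ι)) : Prop :=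
  ∃ Y : List (ZLat ι), (∀ a ∈ Y, a ∈ X) ∧ r = spanOf Y

/-- The sublist `X ∩ r`. -/
def inSub (X : List (ZLat ι)) (r : Submodule ℝ (Amb ι)) : List (ZLat ι) :=
  X.filter (fun a => decide (castV a ∈ r))

/-- The sublist `X \ r`. -/
def outSub (X : List (ZLat ι)) (r : Submodule ℝ (Amb ι)) : List (ZLat ι) :=
  X.filter (fun a => decide (castV a ∉ r))

/-- The operator `∇_{X \ r}`. -/
def nabOut (X : List (ZLat ι)) (r : Submodule ℝ (Amb ι)) (f : ZLat ι → ℤ) : ZLat ι → ℤ :=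
  nabL (outSub X r) f

/-- The space `𝓕(X)`: `∇_{X\r} f` is supported on `Γ ∩ r` for every rational `r`. -/
def memF (X : List (ZLat ι)) (f : ZLat ι → ℤ) : Prop :=
  ∀ r, IsRational X r → support (nabOut X r f) ⊆ {γ | castV γ ∈ r}

/-- The Dahmen–Micchelli space of a list `Y` (inside its span): `f` is killed by
`∇_{Y \ H}` for every rational hyperplane `H` of the span of `Y`. -/
def memDM (Y : List (ZLat ι)) (f : ZLat ι → ℤ) : Prop :=
  ∀ H, IsRational Y H → Module.finrank ℝ H + 1 = Module.finrank ℝ (spanOf Y) →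
    nabOut Y H f = 0

/-- `𝓕(X ∩ r)`, viewed as functions on `Γ` supported on `Γ ∩ r`. -/
def memFrel (X : List (ZLat ι)) (r : Submodule ℝ (Amb ι)) (g : ZLat ι → ℤ) : Prop :=
  support g ⊆ {γ | castV γ ∈ r} ∧ memF (inSub X r) g

/-- `DM(X ∩ r)`, viewed as functions on `Γ` supported on `Γ ∩ r`. -/
def memDMrel (X : List (ZLat ι)) (r : Submodule ℝ (Amb ι)) (g : ZLat ι → ℤ) : Prop :=
  support g ⊆ {γ | castV γ ∈ r} ∧ memDM (inSub X r) g

/-- `u` is a regular vector for `X \ r`:  `u ∈ r^⊥` and `⟨u, a⟩ ≠ 0` for all `a ∈ X \ r`.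
It determines the regular face `F` containing it. -/
def Reg (X : List (ZLat ι)) (r : Submodule ℝ (Amb ι)) (u : Amb ι) : Prop :=
  (∀ v ∈ r, dotR u v = 0) ∧ ∀ a ∈ X, castV a ∉ r → dotR u (castV a) ≠ 0

/-- The sublist `B ⊆ X \ r` of elements negative on `u`. -/
def negPart (X : List (ZLat ι)) (r : Submodule ℝ (Amb ι)) (u : Amb ι) : List (ZLat ι) :=
  (outSub X r).filter (fun a => decide (dotR u (castV a) < 0))

/-- The list `[A, -B]`: entries of `X \ r`, with sign flipped on the part negative on `u`. -/
def signedOut (X : List (ZLat ι)) (r : Submodule ℝ (Amb ι)) (u : Amb ι) : List (ZLat ι) :=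
  (outSub X r).map (fun a => if 0 < dotR u (castV a) then a else -a)

/-- The special function `𝓟_{X\r}^F` for the face `F ∋ u`:
`(-1)^{|B|} τ_{-∑_{b∈B} b} (∏_{a∈A} ∑_k δ_{ka}) * (∏_{b∈B} ∑_k δ_{-kb})`. -/
def PF (X : List (ZLat ι)) (r : Submodule ℝ (Amb ι)) (u : Amb ι) : ZLat ι → ℤ :=
  fun γ => (-1) ^ (negPart X r u).length *
    partFn (signedOut X r u) (γ + (negPart X r u).sum)

/-- The support region `-∑_{b∈B} b + C(A, -B)` of `𝓟_{X\r}^F`, as a subset of `Γ`. -/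
def PFsupp (X : List (ZLat ι)) (r : Submodule ℝ (Amb ι)) (u : Amb ι) : Set (ZLat ι) :=
  {γ | castV (γ + (negPart X r u).sum) ∈ coneC (signedOut X r u)}

/-- Convolution of two functions on the lattice. -/
def conv (f g : ZLat ι → ℤ) : ZLat ι → ℤ := fun γ => ∑ᶠ μ, f (γ - μ) * g μ

/-- The union of all rational hyperplanes (inside the span of `Y`). -/
def hyperUnion (Y : List (ZLat ι)) : Set (Amb ι) :=
  {v | ∃ H, IsRational Y H ∧ Module.finrank ℝ H + 1 = Module.finrank ℝ (spanOf Y) ∧ v ∈ H}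

/-- A tope for `Y`: a connected component of the complement (in the span of `Y`) of the
union of the hyperplanes spanned by sublists of `Y`. -/
def IsTope (Y : List (ZLat ι)) (τ : Set (Amb ι)) : Prop :=
  ∃ v ∈ (spanOf Y : Set (Amb ι)) \ hyperUnion Y,
    τ = connectedComponentIn ((spanOf Y : Set (Amb ι)) \ hyperUnion Y) v

/-- The set of singular vectors: the union of the cones `C(Y)` over sublists `Y` of `X`
not spanning `V`. -/
def singSet (X : List (ZLat ι)) : Set (Amb ι) :=
  {v | ∃ Y : List (ZLat ι), (∀ a ∈ Y, a ∈ X) ∧ spanOf Y ≠ ⊤ ∧ v ∈ coneC Y}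

/-- A big cell: a connected component of the complement of the set of singular vectors. -/
def IsBigCell (X : List (ZLat ι)) (c : Set (Amb ι)) : Prop :=
  ∃ v ∈ (singSet X)ᶜ, c = connectedComponentIn (singSet X)ᶜ v

/-- Minkowski difference of sets, `A - B`. -/
def sdiffSet (A B : Set (Amb ι)) : Set (Amb ι) := {x | ∃ a ∈ A, ∃ b ∈ B, x = a - b}

/-! Since `C(X)` is pointed and `0 ∉ X`, Hahn–Banach separates `0` from the convex hull of `X`:
some linear functional `φ` is positive on every `a ∈ X`, so `C(X)` lies in the half-space
`φ ≥ 0`. Positivity makes all representation sets finite, whence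
`𝓟_{a::Y}(γ) = 𝓟_Y(γ) + 𝓟_{a::Y}(γ - a)`, i.e. `∇_a 𝓟_{a::Y} = 𝓟_Y`, and `∇_X 𝓟_X = δ₀` follows
by induction. For uniqueness, the difference `g` of two solutions vanishes on `φ < 0` and
`∇_X g = 0`. Each `∇_a` preserves vanishing on `φ < 0`, and a function killed by `∇_a` is
`a`-periodic, so it agrees with its values far inside `φ < 0`, where it is zero. -/

section

open Finset

variable {ι : Type*} {φ : ZLat ι →+ ℝ}

def castHom : ZLat ι →+ Amb ι := (Int.castAddHom ℝ).compLeft ι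

@[simp] lemma castHom_apply (γ : ZLat ι) : castHom γ = castV γ := rfl

lemma castV_injective : Injective (castV (ι := ι)) := fun _ _ h =>
  funext fun i => Int.cast_injective (congrFun h i)

lemma castV_sum_zsmul {n : ℕ} (k : Fin n → ℤ) (v : Fin n → ZLat ι) :
    castV (∑ i, k i • v i) = ∑ i, (k i : ℝ) • castV (v i) := by
  simp only [← castHom_apply, map_sum, map_zsmul, Int.cast_smul_eq_zsmul]

lemma zero_mem_coneC (Y : List (ZLat ι)) : (0 : Amb ι) ∈ coneC Y :=
  ⟨0, fun _ => le_rfl, by simp⟩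

lemma add_mem_coneC {Y : List (ZLat ι)} {v w : Amb ι} (hv : v ∈ coneC Y) (hw : w ∈ coneC Y) :
    v + w ∈ coneC Y := by
  obtain ⟨s, hs, rfl⟩ := hv
  obtain ⟨t, ht, rfl⟩ := hw
  exact ⟨s + t, fun i => add_nonneg (hs i) (ht i), by simp [add_smul, sum_add_distrib]⟩

lemma smul_mem_coneC {Y : List (ZLat ι)} {c : ℝ} (hc : 0 ≤ c) {v : Amb ι} (hv : v ∈ coneC Y) :
    c • v ∈ coneC Y := by
  obtain ⟨t, ht, rfl⟩ := hv
  exact ⟨c • t, fun i => mul_nonneg hc (ht i), by simp [smul_sum, smul_smul]⟩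

lemma castV_mem_coneC {Y : List (ZLat ι)} {a : ZLat ι} (ha : a ∈ Y) : castV a ∈ coneC Y := by
  obtain ⟨j, rfl⟩ := List.mem_iff_get.mp ha
  refine ⟨Pi.single j 1, fun i => ?_, ?_⟩
  · by_cases h : i = j <;> simp [h]
  · simp [Pi.single_apply]

lemma sum_smul_mem_coneC {Y : List (ZLat ι)} {s : Finset (Amb ι)} {w : Amb ι → ℝ}
    (hw : ∀ y ∈ s, 0 ≤ w y) (hs : ∀ y ∈ s, y ∈ castV '' {a | a ∈ Y}) :
    ∑ y ∈ s, w y • y ∈ coneC Y := by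
  refine sum_induction _ (· ∈ coneC Y) (fun _ _ => add_mem_coneC) (zero_mem_coneC Y) ?_
  intro y hy
  obtain ⟨a, ha, rfl⟩ := hs y hy
  exact smul_mem_coneC (hw _ hy) (castV_mem_coneC ha)

lemma zero_notMem_convexHull_of_pointedList {X : List (ZLat ι)} (hX0 : ∀ a ∈ X, a ≠ 0)
    (hpt : PointedList X) : (0 : Amb ι) ∉ convexHull ℝ (castV '' {a | a ∈ X}) := by
  classical
  set s := X.toFinset.image castV
  have hs : castV '' {a | a ∈ X} = ↑s := by ext; simp [s]
  rw [hs, Finset.mem_convexHull']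
  rintro ⟨w, hw0, hw1, hw⟩
  obtain ⟨y, hy, hwy⟩ : ∃ y ∈ s, 0 < w y := by
    by_contra! h
    linarith [sum_nonpos h]
  have hys : ∀ z ∈ s, z ∈ castV '' {a | a ∈ X} := by simp [hs]
  have hneg : -y = (w y)⁻¹ • ∑ z ∈ s.erase y, w z • z := by
    rw [← add_sum_erase _ _ hy] at hw
    rw [eq_neg_of_add_eq_zero_right hw, smul_neg, smul_smul, inv_mul_cancel₀ hwy.ne', one_smul]
  obtain ⟨a, ha, rfl⟩ := hys y hy
  have hcone : -castV a ∈ coneC X := hneg ▸ smul_mem_coneC (inv_nonneg.mpr hwy.le)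
    (sum_smul_mem_coneC (fun z hz => hw0 z (mem_of_mem_erase hz))
      (fun z hz => hys z (mem_of_mem_erase hz)))
  refine hX0 a ha (castV_injective ?_)
  rw [hpt _ (castV_mem_coneC ha) hcone]
  exact (map_zero castHom).symm

lemma exists_linearMap_pos_of_pointedList {X : List (ZLat ι)} (hX0 : ∀ a ∈ X, a ≠ 0)
    (hpt : PointedList X) :
    ∃ ψ : Amb ι →ₗ[ℝ] ℝ, ∀ a ∈ X, 0 < ψ (castV a) := by
  obtain ⟨ψ, c, hc, hψ⟩ := geometric_hahn_banach_point_closed (convex_convexHull ℝ _)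
    ((X.finite_toSet.image castV).isClosed_convexHull (𝕜 := ℝ))
    (zero_notMem_convexHull_of_pointedList hX0 hpt)
  exact ⟨ψ, fun a ha => (map_zero ψ ▸ hc).trans (hψ _ (subset_convexHull ℝ _ ⟨a, ha, rfl⟩))⟩

lemma nonneg_of_mem_coneC {Y : List (ZLat ι)} {ψ : Amb ι →ₗ[ℝ] ℝ}
    (hψ : ∀ a ∈ Y, 0 ≤ ψ (castV a)) {v : Amb ι} (hv : v ∈ coneC Y) : 0 ≤ ψ v := by
  obtain ⟨t, ht, rfl⟩ := hv
  simp only [map_sum, map_smul, smul_eq_mul]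
  exact sum_nonneg fun i _ => mul_nonneg (ht i) (hψ _ (Y.get_mem i))


def repSet (Y : List (ZLat ι)) (γ : ZLat ι) : Set (Fin Y.length → ℕ) :=
  {k | ∑ i, (k i : ℤ) • Y.get i = γ}

@[simp] lemma mem_repSet {Y : List (ZLat ι)} {γ : ZLat ι} {k : Fin Y.length → ℕ} :
    k ∈ repSet Y γ ↔ ∑ i, (k i : ℤ) • Y.get i = γ :=
  Iff.rfl

lemma partFn_eq_ncard (Y : List (ZLat ι)) (γ : ZLat ι) : partFn Y γ = (repSet Y γ).ncard := by
  rw [partFn, ← Nat.card_coe_set_eq]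
  rfl

lemma repSet_finite {Y : List (ZLat ι)} (hY : ∀ a ∈ Y, 0 < φ a)
    (γ : ZLat ι) : (repSet Y γ).Finite := by
  refine (Set.finite_Iic fun i => ⌈φ γ / φ (Y.get i)⌉₊).subset fun k hk i => ?_
  have hpos : ∀ j, 0 < φ (Y.get j) := fun j => hY _ (Y.get_mem j)
  have hsum : ∑ j, (k j : ℝ) * φ (Y.get j) = φ γ := by
    rw [← mem_repSet.mp hk, map_sum]
    exact sum_congr rfl fun j _ => by rw [map_zsmul, zsmul_eq_mul, Int.cast_natCast]
  have hle : (k i : ℝ) * φ (Y.get i) ≤ φ γ :=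
    hsum ▸ single_le_sum (fun j _ => mul_nonneg (Nat.cast_nonneg _) (hpos j).le) (mem_univ i)
  exact Nat.cast_le.mp (((le_div_iff₀ (hpos i)).mpr hle).trans (Nat.le_ceil _))

lemma mem_repSet_cons {a : ZLat ι} {Y : List (ZLat ι)} {γ : ZLat ι}
    {k : Fin (Y.length + 1) → ℕ} :
    k ∈ repSet (a :: Y) γ ↔ (k 0 : ℤ) • a + ∑ i, (Fin.tail k i : ℤ) • Y.get i = γ := by
  change ∑ i : Fin (Y.length + 1), (k i : ℤ) • (a :: Y).get i = γ ↔ _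
  rw [Fin.sum_univ_succ]
  rfl

lemma range_cons_zero (n : ℕ) :
    Set.range (Fin.cons (α := fun _ => ℕ) 0 : (Fin n → ℕ) → Fin (n + 1) → ℕ) = {k | k 0 = 0} := by
  ext k
  constructor
  · rintro ⟨k, rfl⟩
    rfl
  · intro hk
    exact ⟨Fin.tail k, by rw [← show k 0 = 0 from hk, Fin.cons_self_tail]⟩

lemma range_add_single_zero (n : ℕ) :
    Set.range (· + Pi.single 0 1 : (Fin (n + 1) → ℕ) → Fin (n + 1) → ℕ) = {k | k 0 = 0}ᶜ := by
  ext k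
  constructor
  · rintro ⟨k, rfl⟩
    simp
  · intro hk
    refine ⟨k - Pi.single 0 1, funext fun i => ?_⟩
    have : k 0 ≠ 0 := hk
    by_cases hi : i = 0
    · subst hi
      simp only [Pi.add_apply, Pi.sub_apply, Pi.single_eq_same]
      omega
    · simp [hi]

lemma ncard_eq_ncard_preimage_cons_zero_add {n : ℕ} {S : Set (Fin (n + 1) → ℕ)}
    (hS : S.Finite) :
    S.ncard = (Fin.cons (α := fun _ => ℕ) 0 ⁻¹' S).ncard +
      ((fun k : Fin (n + 1) → ℕ => k + Pi.single 0 1) ⁻¹' S).ncard := by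
  rw [← Set.ncard_inter_add_ncard_sdiff_eq_ncard S {k | k 0 = 0} hS, Set.sdiff_eq,
    ← range_add_single_zero, ← range_cons_zero, ← Set.image_preimage_eq_inter_range,
    ← Set.image_preimage_eq_inter_range,
    Set.ncard_image_of_injective _ (Fin.cons_right_injective (α := fun _ => ℕ) 0),
    Set.ncard_image_of_injective _ (add_left_injective _)]

lemma ncard_repSet_cons {a : ZLat ι} {Y : List (ZLat ι)} {γ : ZLat ι}
    (h : (repSet (a :: Y) γ).Finite) :
    (repSet (a :: Y) γ).ncard = (repSet Y γ).ncard + (repSet (a :: Y) (γ - a)).ncard := by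
  have h₁ : Fin.cons (α := fun _ => ℕ) 0 ⁻¹' repSet (a :: Y) γ = repSet Y γ := by
    ext k
    exact mem_repSet_cons.trans (by simp only [Fin.cons_zero, Fin.tail_cons, Nat.cast_zero,
      zero_smul, zero_add, mem_repSet])
  have h₂ : (fun k : Fin (Y.length + 1) → ℕ => k + Pi.single 0 1) ⁻¹' repSet (a :: Y) γ =
      repSet (a :: Y) (γ - a) := by
    ext k
    have htail : Fin.tail (k + Pi.single 0 1) = Fin.tail k := funext fun i => by
      simp [Fin.tail, Fin.succ_ne_zero]
    refine mem_repSet_cons.trans (mem_repSet_cons.trans ?_).symm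
    simp only [htail, Pi.add_apply, Pi.single_eq_same, Nat.cast_add, Nat.cast_one, add_smul,
      one_smul, eq_sub_iff_add_eq, add_right_comm]
  rw [ncard_eq_ncard_preimage_cons_zero_add h, h₁, h₂]


lemma partFn_cons {a : ZLat ι} {Y : List (ZLat ι)} (hY : ∀ b ∈ a :: Y, 0 < φ b) (γ : ZLat ι) :
    partFn (a :: Y) γ = partFn Y γ + partFn (a :: Y) (γ - a) := by
  simp only [partFn_eq_ncard, ncard_repSet_cons (repSet_finite hY γ), Nat.cast_add]

lemma nab_partFn_cons {a : ZLat ι} {Y : List (ZLat ι)} (hY : ∀ b ∈ a :: Y, 0 < φ b) :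
    nab a (partFn (a :: Y)) = partFn Y :=
  funext fun γ => sub_eq_of_eq_add (partFn_cons hY γ)

lemma partFn_nil [Fintype ι] : partFn ([] : List (ZLat ι)) = delta0 := by
  funext γ
  rw [partFn_eq_ncard, delta0]
  by_cases hγ : γ = 0 <;> simp [repSet, hγ, eq_comm]

lemma nabL_cons (a : ZLat ι) (Y : List (ZLat ι)) (f : ZLat ι → ℤ) :
    nabL (a :: Y) f = nab a (nabL Y f) := rfl

lemma nab_comm (a b : ZLat ι) (f : ZLat ι → ℤ) : nab a (nab b f) = nab b (nab a f) := by
  funext γ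
  simp only [nab, sub_right_comm γ b a]
  ring

lemma nabL_nab (Y : List (ZLat ι)) (a : ZLat ι) (f : ZLat ι → ℤ) :
    nabL Y (nab a f) = nab a (nabL Y f) := by
  induction Y with
  | nil => rfl
  | cons b Y ih => rw [nabL_cons, nabL_cons, ih, nab_comm]

lemma nabL_sub (Y : List (ZLat ι)) (f g : ZLat ι → ℤ) :
    nabL Y (f - g) = nabL Y f - nabL Y g := by
  induction Y with
  | nil => rfl
  | cons a Y ih =>
    funext γ
    simp only [nabL_cons, ih, nab, Pi.sub_apply]
    ring

lemma nabL_partFn [Fintype ι] {Y : List (ZLat ι)} (hY : ∀ a ∈ Y, 0 < φ a) :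
    nabL Y (partFn Y) = delta0 := by
  induction Y with
  | nil => exact partFn_nil
  | cons a Y ih =>
    rw [nabL_cons, ← nabL_nab, nab_partFn_cons hY,
      ih fun b hb => hY b (List.mem_cons_of_mem a hb)]

lemma support_partFn_subset (Y : List (ZLat ι)) :
    support (partFn Y) ⊆ {γ | castV γ ∈ coneC Y} := by
  intro γ hγ
  rw [mem_support, partFn_eq_ncard, Nat.cast_ne_zero] at hγ
  obtain ⟨k, hk⟩ := Set.nonempty_of_ncard_ne_zero hγ
  refine ⟨fun i => k i, fun i => Nat.cast_nonneg _, ?_⟩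
  rw [← mem_repSet.mp hk, castV_sum_zsmul]
  simp only [Int.cast_natCast]

lemma support_nab_subset {a : ZLat ι} (ha : 0 < φ a) {g : ZLat ι → ℤ}
    (hg : support g ⊆ {γ | 0 ≤ φ γ}) : support (nab a g) ⊆ {γ | 0 ≤ φ γ} := by
  intro γ hγ
  by_contra hneg
  have hγ' : φ (γ - a) < 0 := by
    have : φ γ < 0 := not_le.mp hneg
    rw [map_sub]
    linarith
  apply hγ
  rw [nab, notMem_support.mp fun h => hneg (hg h),
    notMem_support.mp fun h => not_le.mpr hγ' (hg h), sub_zero]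

lemma support_nabL_subset {Y : List (ZLat ι)} (hY : ∀ a ∈ Y, 0 < φ a) {g : ZLat ι → ℤ}
    (hg : support g ⊆ {γ | 0 ≤ φ γ}) : support (nabL Y g) ⊆ {γ | 0 ≤ φ γ} := by
  induction Y with
  | nil => exact hg
  | cons a Y ih =>
    exact support_nab_subset (hY a List.mem_cons_self)
      (ih fun b hb => hY b (List.mem_cons_of_mem a hb))

lemma eq_zero_of_nab_eq_zero {a : ZLat ι} (ha : 0 < φ a) {g : ZLat ι → ℤ}
    (hg : support g ⊆ {γ | 0 ≤ φ γ}) (h : nab a g = 0) : g = 0 := by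
  have hper : Periodic g a := fun γ => by
    simpa [nab, sub_eq_zero] using congrFun h (γ + a)
  funext γ
  obtain ⟨n, hn⟩ := exists_nat_gt (φ γ / φ a)
  rw [← hper.sub_nsmul_eq n, Pi.zero_apply]
  refine notMem_support.mp fun hmem => ?_
  have hle : 0 ≤ φ (γ - n • a) := hg hmem
  rw [map_sub, map_nsmul, nsmul_eq_mul] at hle
  linarith [(div_lt_iff₀ ha).mp hn]

lemma eq_zero_of_nabL_eq_zero {Y : List (ZLat ι)} (hY : ∀ a ∈ Y, 0 < φ a) {g : ZLat ι → ℤ}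
    (hg : support g ⊆ {γ | 0 ≤ φ γ}) (h : nabL Y g = 0) : g = 0 := by
  induction Y with
  | nil => exact h
  | cons a Y ih =>
    have hY' : ∀ b ∈ Y, 0 < φ b := fun b hb => hY b (List.mem_cons_of_mem a hb)
    exact ih hY' (eq_zero_of_nab_eq_zero (hY a List.mem_cons_self)
      (support_nabL_subset hY' hg) h)

end

theorem partFn_unique_general {ι : Type*} [Fintype ι] (X : List (ZLat ι))
    (hX0 : ∀ a ∈ X, a ≠ 0) (hpt : PointedList X) :
    (nabL X (partFn X) = delta0 ∧
      Function.support (partFn X) ⊆ {γ | castV γ ∈ coneC X}) ∧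
    ∀ f : ZLat ι → ℤ, nabL X f = delta0 →
      Function.support f ⊆ {γ | castV γ ∈ coneC X} → f = partFn X := by
  obtain ⟨ψ, hψ⟩ := exists_linearMap_pos_of_pointedList hX0 hpt
  set φ : ZLat ι →+ ℝ := ψ.toAddMonoidHom.comp castHom
  have hφ : ∀ a ∈ X, 0 < φ a := hψ
  have hcone : {γ | castV γ ∈ coneC X} ⊆ {γ | 0 ≤ φ γ} := fun _ hγ =>
    nonneg_of_mem_coneC (fun a ha => (hψ a ha).le) hγ
  refine ⟨⟨nabL_partFn hφ, support_partFn_subset X⟩, fun f hf hfsupp => ?_⟩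
  refine sub_eq_zero.mp (eq_zero_of_nabL_eq_zero hφ ?_ ?_)
  · exact (support_sub _ _).trans
      (Set.union_subset (hfsupp.trans hcone) ((support_partFn_subset X).trans hcone))
  · rw [nabL_sub, hf, nabL_partFn hφ, sub_self]

/-- `𝓟_X` is the unique `ℤ`-valued function on `Γ` satisfying `∇_X f = δ₀` whose support
is contained in the cone `C(X)`. -/
theorem partFn_unique {ι : Type*} [Fintype ι] (X : List (ZLat ι))
    (hX0 : ∀ a ∈ X, a ≠ 0) (hspan : spanOf X = ⊤) (hpt : PointedList X) :
    (nabL X (partFn X) = delta0 ∧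
      Function.support (partFn X) ⊆ {γ | castV γ ∈ coneC X}) ∧
    ∀ f : ZLat ι → ℤ, nabL X f = delta0 →
      Function.support f ⊆ {γ | castV γ ∈ coneC X} → f = partFn X :=
  partFn_unique_general X hX0 hpt
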